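/- arXiv:1703.01403 — 8 statements merged into one kernel-verified Lean document; each statement's English description precedes it below -/
import Mathlib

section
/- Let E : ℂ → ℂ be entire and suppose there exist constants C, C' > 0 and ρ ∈ [0,1) such that |E(z)| ≤ C·exp(C'·|z|^ρ) for all z ∈ ℂ (i.e. E has order less than one). If E(it) → 0 as t → +∞ and as t → −∞ along the real axis, then E(λ) = 0 for every λ ∈ ℂ. -/
/-!
Since `E` is continuous and tends to `0` at both ends of the imaginary axis, it is bounded there,
say by `M`. The entire function `g z = E (I * z ^ 2)` has order `2ρ < 2` and maps the boundary rays
of the first two quadrants into the imaginary axis, so the Phragmén–Lindelöf principle for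
quadrants bounds `g` by `M` on the closed upper half-plane. Every `w` is `I * z ^ 2` for some `z` in
that half-plane, so `E` is bounded by `M`, hence constant by Liouville, and the constant is the
limit `0`.
-/

open Complex Filter Asymptotics Bornology Set

theorem Complex.exists_sq_eq_and_im_nonneg (w : ℂ) : ∃ z : ℂ, z ^ 2 = w ∧ 0 ≤ z.im := by
  obtain ⟨z, hz⟩ := IsAlgClosed.exists_pow_nat_eq w two_pos
  rcases le_total 0 z.im with h | h
  · exact ⟨z, hz, h⟩
  · exact ⟨-z, by rw [neg_sq, hz], by simpa using h⟩

theorem Complex.tendsto_I_mul_sq_cobounded :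
    Tendsto (fun z : ℂ => I * z ^ 2) (cobounded ℂ) (cobounded ℂ) := by
  simp only [← tendsto_norm_atTop_iff_cobounded, norm_mul, norm_I, one_mul, norm_pow]
  exact (tendsto_pow_atTop two_ne_zero).comp tendsto_norm_cobounded_atTop

namespace PhragmenLindelof

theorem isBigO_comp_I_mul_sq {F : Type*} [Norm F] {f : ℂ → F} {B c : ℝ}
    (hf : f =O[cobounded ℂ] fun w => Real.exp (B * ‖w‖ ^ c)) :
    (fun z => f (I * z ^ 2)) =O[cobounded ℂ] fun z => Real.exp (B * ‖z‖ ^ (2 * c)) := by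
  refine (hf.comp_tendsto tendsto_I_mul_sq_cobounded).congr_right fun z => ?_
  simp only [Function.comp_apply, norm_mul, norm_I, one_mul, norm_pow]
  rw [← Real.rpow_natCast, ← Real.rpow_mul (norm_nonneg z), Nat.cast_ofNat]

variable {F : Type*} [NormedAddCommGroup F] [NormedSpace ℂ F] {f : ℂ → F} {C : ℝ}

theorem upper_half_plane_comp_I_mul_sq (hf : Differentiable ℂ f)
    (hexp : ∃ c < (1 : ℝ), ∃ B, f =O[cobounded ℂ] fun w => Real.exp (B * ‖w‖ ^ c))
    (haxis : ∀ t : ℝ, ‖f (I * t)‖ ≤ C) {z : ℂ} (hz : 0 ≤ z.im) :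
    ‖f (I * z ^ 2)‖ ≤ C := by
  obtain ⟨c, hc, B, hO⟩ := hexp
  set g : ℂ → F := fun z => f (I * z ^ 2)
  change ‖g z‖ ≤ C
  have hd : Differentiable ℂ g := hf.comp ((differentiable_const I).mul (differentiable_pow 2))
  have hgrowth (s : Set ℂ) : ∃ c' < (2 : ℝ), ∃ B', g =O[cobounded ℂ ⊓ 𝓟 s]
      fun z => Real.exp (B' * ‖z‖ ^ c') :=
    ⟨2 * c, by linarith, B, (isBigO_comp_I_mul_sq hO).mono inf_le_left⟩
  have hre (x : ℝ) : ‖g x‖ ≤ C := by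
    convert haxis (x ^ 2) using 3; push_cast; ring
  have him (x : ℝ) : ‖g (x * I)‖ ≤ C := by
    convert haxis (-x ^ 2) using 3; push_cast; linear_combination (I * (x : ℂ) ^ 2) * I_sq
  rcases le_total 0 z.re with hz_re | hz_re
  · exact quadrant_I hd.diffContOnCl (hgrowth _) (fun x _ => hre x) (fun x _ => him x) hz_re hz
  · exact quadrant_II hd.diffContOnCl (hgrowth _) (fun x _ => hre x) (fun x _ => him x) hz_re hz

theorem entire_of_bounded_on_imaginary_axis (hf : Differentiable ℂ f)
    (hexp : ∃ c < (1 : ℝ), ∃ B, f =O[cobounded ℂ] fun w => Real.exp (B * ‖w‖ ^ c))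
    (haxis : ∀ t : ℝ, ‖f (I * t)‖ ≤ C) (w : ℂ) : ‖f w‖ ≤ C := by
  obtain ⟨z, hz, hz_im⟩ := exists_sq_eq_and_im_nonneg (-I * w)
  have hw : I * z ^ 2 = w := by rw [hz, ← mul_assoc, mul_neg, I_mul_I, neg_neg, one_mul]
  simpa only [hw] using upper_half_plane_comp_I_mul_sq hf hexp haxis hz_im

end PhragmenLindelof

theorem entire_order_lt_one_vanishing_general
    (E : ℂ → ℂ) (hE : Differentiable ℂ E)
    (C C' ρ : ℝ) (hρ : ρ ∈ Set.Ico (0:ℝ) 1)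
    (hbound : ∀ z : ℂ, ‖E z‖ ≤ C * Real.exp (C' * ‖z‖ ^ ρ))
    (htop : Filter.Tendsto (fun t : ℝ => E (I * t)) Filter.atTop (nhds 0))
    (hbot : Filter.Tendsto (fun t : ℝ => E (I * t)) Filter.atBot (nhds 0)) :
    ∀ lam : ℂ, E lam = 0 := by
  have haxis_cont : Continuous fun t : ℝ => E (I * t) := hE.continuous.comp (by fun_prop)
  obtain ⟨M, hM⟩ := isBounded_iff_forall_norm_le.1
    (haxis_cont.isBounded_range_iff_isBigO_atTop_atBot.2 ⟨htop.isBigO_one ℝ, hbot.isBigO_one ℝ⟩)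
  have hexp : ∃ c < (1 : ℝ), ∃ B, E =O[cobounded ℂ] fun w => Real.exp (B * ‖w‖ ^ c) :=
    ⟨ρ, hρ.2, C', .of_bound C <| .of_forall fun z => by
      simpa only [Real.norm_eq_abs, abs_of_pos (Real.exp_pos _)] using hbound z⟩
  have hbdd : ∀ w, ‖E w‖ ≤ M := PhragmenLindelof.entire_of_bounded_on_imaginary_axis hE hexp
    fun t => hM _ (mem_range_self t)
  have hconst : ∀ a b, E a = E b :=
    hE.apply_eq_apply_of_bounded (isBounded_iff_forall_norm_le.2 ⟨M, forall_mem_range.2 hbdd⟩)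
  intro lam
  refine tendsto_nhds_unique tendsto_const_nhds (htop.congr fun t => ?_)
  exact hconst _ lam

/-- Lemma 3.2: an entire function of order less than one that tends to `0` along the
imaginary axis in both directions vanishes identically. -/
theorem entire_order_lt_one_vanishing
    (E : ℂ → ℂ) (hE : Differentiable ℂ E)
    (C C' ρ : ℝ) (hC : 0 < C) (hC' : 0 < C') (hρ : ρ ∈ Set.Ico (0:ℝ) 1)
    (hbound : ∀ z : ℂ, ‖E z‖ ≤ C * Real.exp (C' * ‖z‖ ^ ρ))
    (htop : Filter.Tendsto (fun t : ℝ => E (I * t)) Filter.atTop (nhds 0))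
    (hbot : Filter.Tendsto (fun t : ℝ => E (I * t)) Filter.atBot (nhds 0)) :
    ∀ lam : ℂ, E lam = 0 :=
  entire_order_lt_one_vanishing_general E hE C C' ρ hρ hbound htop hbot
end

section
/- Let b > 0, let K : ℝ × ℝ → ℝ be measurable and bounded, and let Q ∈ L²(0,b) be real-valued. If Q(t) + ∫_t^b K(x,t)·Q(x) dx = 0 for almost every t ∈ (0,b), then Q = 0 almost everywhere on (0,b). (A homogeneous Volterra integral equation of the second kind with bounded kernel has only the zero solution.) -/
/-!
If `Q` solves the homogeneous equation, then `|Q t| ≤ M F t` almost everywhere, where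
`F t = ∫_t^b |Q|`. Integrating gives the backward Gronwall inequality `F t ≤ M ∫_t^b F`, and
iterating it `n` times bounds `F t` by `C (M (b - t))ⁿ / n!`, which tends to `0`. Hence
`F 0 = ∫_0^b |Q| = 0`.
-/

open MeasureTheory Set Filter Topology intervalIntegral Nat

theorem integral_sub_pow (n : ℕ) (t b : ℝ) :
    ∫ x in t..b, (b - x) ^ n = (b - t) ^ (n + 1) / (n + 1) := by
  rw [integral_comp_sub_left (fun u => u ^ n) b, sub_self, integral_pow]
  ring

section Gronwall

variable {a b M : ℝ}

theorem MeasureTheory.IntegrableOn.intervalIntegrable_of_mem_Icc {f : ℝ → ℝ} {t : ℝ}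
    (hf : IntegrableOn f (Icc a b)) (ht : t ∈ Icc a b) : IntervalIntegrable f volume t b :=
  (intervalIntegrable_iff_integrableOn_Icc_of_le ht.2).2 (hf.mono_set (Icc_subset_Icc_left ht.1))

theorem le_mul_pow_div_factorial_of_le_mul_integral {F : ℝ → ℝ} {C : ℝ} (hM : 0 ≤ M)
    (hF : IntegrableOn F (Icc a b)) (hFC : ∀ t ∈ Icc a b, F t ≤ C)
    (hle : ∀ t ∈ Icc a b, F t ≤ M * ∫ x in t..b, F x) (n : ℕ) :
    ∀ t ∈ Icc a b, F t ≤ C * (M * (b - t)) ^ n / n ! := by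
  induction n with
  | zero => simpa using hFC
  | succ n ih =>
    intro t ht
    have hstep : ∫ x in t..b, F x ≤ ∫ x in t..b, C * M ^ n / n ! * (b - x) ^ n :=
      integral_mono_on ht.2 (hF.intervalIntegrable_of_mem_Icc ht)
        (Continuous.intervalIntegrable (by fun_prop) _ _)
        fun x hx => (ih x ⟨ht.1.trans hx.1, hx.2⟩).trans_eq (by rw [mul_pow]; ring)
    calc F t ≤ M * ∫ x in t..b, F x := hle t ht
      _ ≤ M * ∫ x in t..b, C * M ^ n / n ! * (b - x) ^ n := by gcongr
      _ = C * (M * (b - t)) ^ (n + 1) / (n + 1)! := by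
        rw [intervalIntegral.integral_const_mul, integral_sub_pow, factorial_succ, mul_pow]
        push_cast
        field_simp
        ring

theorem eqOn_zero_of_le_mul_integral {F : ℝ → ℝ} (hF0 : ∀ t ∈ Icc a b, 0 ≤ F t)
    (hF : IntegrableOn F (Icc a b)) (hle : ∀ t ∈ Icc a b, F t ≤ M * ∫ x in t..b, F x) :
    EqOn F 0 (Icc a b) := by
  -- Passing to `|M|` is harmless as `F ≥ 0`, and the inequality itself bounds `F` by `C` below.
  have hle_abs : ∀ t ∈ Icc a b, F t ≤ |M| * ∫ x in t..b, F x := fun t ht =>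
    (hle t ht).trans <| mul_le_mul_of_nonneg_right (le_abs_self M) <|
      integral_nonneg ht.2 fun x hx => hF0 x ⟨ht.1.trans hx.1, hx.2⟩
  have hFC : ∀ t ∈ Icc a b, F t ≤ |M| * ∫ x in a..b, F x := fun t ht =>
    (hle_abs t ht).trans <| mul_le_mul_of_nonneg_left (integral_mono_interval ht.1 ht.2 le_rfl
      (ae_restrict_of_forall_mem measurableSet_Ioc fun x hx => hF0 x (Ioc_subset_Icc_self hx))
      (hF.intervalIntegrable_of_mem_Icc ⟨le_rfl, ht.1.trans ht.2⟩)) (abs_nonneg M)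
  intro t ht
  set C := |M| * ∫ x in a..b, F x
  have hlim : Tendsto (fun n : ℕ => C * ((|M| * (b - t)) ^ n / n !)) atTop (𝓝 0) := by
    simpa using (FloorSemiring.tendsto_pow_div_factorial_atTop _).const_mul C
  refine le_antisymm (ge_of_tendsto' hlim fun n => ?_) (hF0 t ht)
  simpa only [mul_div_assoc] using
    le_mul_pow_div_factorial_of_le_mul_integral (abs_nonneg M) hF hFC hle_abs n t ht

theorem ae_eq_zero_of_le_mul_integral {g : ℝ → ℝ} (hg0 : 0 ≤ g) (hg : IntegrableOn g (Ioo a b))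
    (hle : ∀ᵐ t ∂volume.restrict (Ioo a b), g t ≤ M * ∫ x in t..b, g x) :
    ∀ᵐ t ∂volume.restrict (Ioo a b), g t = 0 := by
  rcases le_or_gt b a with hba | hab
  · simp [Ioo_eq_empty_of_le hba]
  have hgIcc : IntegrableOn g (Icc a b) := by
    rwa [integrableOn_Icc_iff_integrableOn_Ioo]
  set F : ℝ → ℝ := fun t => ∫ x in t..b, g x
  have hF : IntegrableOn F (Icc a b) := by
    have hcont := continuousOn_primitive_interval_left (μ := volume) (b := b)
      (by rwa [uIcc_of_le hab.le])
    rw [uIcc_of_le hab.le] at hcont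
    exact hcont.integrableOn_Icc
  have hFle : ∀ t ∈ Icc a b, F t ≤ M * ∫ x in t..b, F x := fun t ht => by
    rw [← intervalIntegral.integral_const_mul]
    refine integral_mono_ae_restrict ht.2 (hgIcc.intervalIntegrable_of_mem_Icc ht)
      ((hF.intervalIntegrable_of_mem_Icc ht).const_mul M) ?_
    rw [← Measure.restrict_congr_set Ioo_ae_eq_Icc]
    exact ae_restrict_of_ae_restrict_of_subset (Ioo_subset_Ioo_left ht.1) hle
  have hFa : F a = 0 := eqOn_zero_of_le_mul_integral
    (fun t ht => integral_nonneg ht.2 fun x _ => hg0 x) hF hFle ⟨le_rfl, hab.le⟩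
  have hint : ∫ x in Ioo a b, g x = 0 := by
    rw [← integral_Ioc_eq_integral_Ioo, ← integral_of_le hab.le]
    exact hFa
  exact (setIntegral_eq_zero_iff_of_nonneg_ae (ae_of_all _ hg0) hg).1 hint

end Gronwall

theorem ae_abs_le_mul_integral_abs_of_volterra {a b M : ℝ} {K : ℝ → ℝ → ℝ} {Q : ℝ → ℝ}
    (hKbd : ∀ x t, |K x t| ≤ M) (hQ : IntegrableOn Q (Ioo a b))
    (heq : ∀ᵐ t ∂volume.restrict (Ioo a b), Q t + ∫ x in Ioo t b, K x t * Q x = 0) :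
    ∀ᵐ t ∂volume.restrict (Ioo a b), |Q t| ≤ M * ∫ x in t..b, |Q x| := by
  filter_upwards [heq, ae_restrict_mem measurableSet_Ioo] with t ht htab
  have hQt : IntegrableOn (fun x => |Q x|) (Ioo t b) :=
    (hQ.mono_set (Ioo_subset_Ioo_left htab.1.le)).abs
  calc |Q t| = |∫ x in Ioo t b, K x t * Q x| := by rw [eq_neg_of_add_eq_zero_left ht, abs_neg]
    _ ≤ ∫ x in Ioo t b, |K x t * Q x| := MeasureTheory.abs_integral_le_integral_abs
    _ ≤ ∫ x in Ioo t b, M * |Q x| :=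
      integral_mono_of_nonneg (ae_of_all _ fun _ => abs_nonneg _) (hQt.const_mul M)
        (ae_of_all _ fun x => by
          simp only [abs_mul]
          exact mul_le_mul_of_nonneg_right (hKbd x t) (abs_nonneg _))
    _ = M * ∫ x in t..b, |Q x| := by
      rw [MeasureTheory.integral_const_mul, integral_of_le htab.2.le, integral_Ioc_eq_integral_Ioo]

theorem volterra_homogeneous_zero_general
    (b : ℝ) (K : ℝ → ℝ → ℝ)
    (M : ℝ) (hKbd : ∀ x t : ℝ, |K x t| ≤ M)
    (Q : ℝ → ℝ) (hQ : MemLp Q 2 (volume.restrict (Set.Ioo 0 b)))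
    (heq : ∀ᵐ t ∂(volume.restrict (Set.Ioo 0 b)),
      Q t + ∫ x in Set.Ioo t b, K x t * Q x = 0) :
    ∀ᵐ t ∂(volume.restrict (Set.Ioo 0 b)), Q t = 0 := by
  have hQi : IntegrableOn Q (Ioo 0 b) := hQ.integrable one_le_two
  filter_upwards [ae_eq_zero_of_le_mul_integral (fun x => abs_nonneg (Q x)) hQi.abs
    (ae_abs_le_mul_integral_abs_of_volterra hKbd hQi heq)] with t ht
  exact abs_eq_zero.1 ht

/-- A homogeneous Volterra integral equation of the second kind with bounded measurable
kernel has only the zero solution. -/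
theorem volterra_homogeneous_zero
    (b : ℝ) (hb : 0 < b) (K : ℝ → ℝ → ℝ)
    (hKmeas : Measurable (Function.uncurry K)) (M : ℝ) (hKbd : ∀ x t : ℝ, |K x t| ≤ M)
    (Q : ℝ → ℝ) (hQ : MemLp Q 2 (volume.restrict (Set.Ioo 0 b)))
    (heq : ∀ᵐ t ∂(volume.restrict (Set.Ioo 0 b)),
      Q t + ∫ x in Set.Ioo t b, K x t * Q x = 0) :
    ∀ᵐ t ∂(volume.restrict (Set.Ioo 0 b)), Q t = 0 :=
  volterra_homogeneous_zero_general b K M hKbd Q hQ heq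
end

section
/- Let b ∈ [3/4, 1], let Q ∈ L²(0,b) be real-valued, let K : ℝ × ℝ → ℝ be measurable and bounded, and let A₂, A₃, A₄ ∈ ℝ with A₂ ≠ 0. Define F on [0,b] piecewise by: F(t) = Q(t) + 2A₃·Q(t + 1/2) for t ∈ [0, 1−b]; F(t) = Q(t) + 2A₃·Q(t + 1/2) + 2A₄·Q(1 − t) for t ∈ (1−b, b − 1/2]; F(t) = Q(t) + 2A₄·Q(1 − t) for t ∈ (b − 1/2, 1/2]; F(t) = 2A₂·Q(t) for t ∈ (1/2, b]. If F(t) + ∫_t^b K(x,t)·Q(x) dx = 0 for almost every t ∈ (0,b), then Q = 0 almost everywhere on (0,b). -/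
/-!
A Volterra inequality `|f t| ≤ C ∫_t^c |f|` on `(a, c)` forces `f = 0` a.e.: the tail integral
`G t = ∫_t^c |f|` satisfies `G t ≤ C (u - t) G t + G u` for `t ≤ u`, so the vanishing of `G`
propagates leftwards from `c` in steps of length `δ < 1 / C`.

On `(1/2, b)` the equation reads `2 A₂ Q t = -∫_t^b K(x,t) Q(x) dx`, which gives such an inequality
since `A₂ ≠ 0`. Once `Q` vanishes on `(1/2, b)`, the terms `Q (t + 1/2)` and `Q (1 - t)` of `F`
vanish for `t ∈ [0, 1/2]` (as `b ≥ 3/4`, these points lie in `[1/2, b]` whenever they occur), so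
on `(0, 1/2)` the equation reads `Q t = -∫_t^{1/2} K(x,t) Q(x) dx` and the same argument applies.
-/

open MeasureTheory Set

theorem setIntegral_Ioo_add_setIntegral_Ioo {g : ℝ → ℝ} {t u c : ℝ}
    (hg : IntegrableOn g (Ioo t c)) (htu : t ≤ u) (huc : u ≤ c) :
    (∫ x in Ioo t u, g x) + ∫ x in Ioo u c, g x = ∫ x in Ioo t c, g x := by
  have hIoo : ∀ {x y : ℝ}, x ≤ y → ∫ z in Ioo x y, g z = ∫ z in x..y, g z := fun hxy => by
    rw [intervalIntegral.integral_of_le hxy, integral_Ioc_eq_integral_Ioo]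
  have hint : ∀ {x y : ℝ}, t ≤ x → x ≤ y → y ≤ c → IntervalIntegrable g volume x y :=
    fun htx hxy hyc => (intervalIntegrable_iff_integrableOn_Ioo_of_le hxy).2
      (hg.mono_set (Ioo_subset_Ioo htx hyc))
  rw [hIoo htu, hIoo huc, hIoo (htu.trans huc),
    intervalIntegral.integral_add_adjacent_intervals (hint le_rfl htu huc)
      (hint htu huc le_rfl)]

section Volterra

variable {f : ℝ → ℝ} {a c C : ℝ}

theorem setIntegral_abs_Ioo_le_of_abs_le (hC : 0 ≤ C) (hf : IntegrableOn f (Ioo a c))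
    (hbd : ∀ᵐ x ∂volume.restrict (Ioo a c), |f x| ≤ C * ∫ y in Ioo x c, |f y|)
    {t u : ℝ} (hat : a ≤ t) (htu : t ≤ u) (huc : u ≤ c) :
    ∫ x in Ioo t c, |f x| ≤ C * (u - t) * (∫ x in Ioo t c, |f x|) + ∫ x in Ioo u c, |f x| := by
  have hft : IntegrableOn f (Ioo t c) := hf.mono_set (Ioo_subset_Ioo_left hat)
  have hbd_tu : ∀ᵐ x ∂volume.restrict (Ioo t u), |f x| ≤ C * ∫ y in Ioo t c, |f y| := by
    rw [ae_restrict_iff' measurableSet_Ioo] at hbd ⊢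
    filter_upwards [hbd] with x hx hxtu
    refine (hx ⟨hat.trans_lt hxtu.1, hxtu.2.trans_le huc⟩).trans ?_
    exact mul_le_mul_of_nonneg_left (setIntegral_mono_set hft.abs
      (ae_of_all _ fun _ => abs_nonneg _) (Ioo_subset_Ioo_left hxtu.1.le).eventuallyLE) hC
  calc ∫ x in Ioo t c, |f x|
      = (∫ x in Ioo t u, |f x|) + ∫ x in Ioo u c, |f x| :=
        (setIntegral_Ioo_add_setIntegral_Ioo hft.abs htu huc).symm
    _ ≤ (∫ _ in Ioo t u, C * ∫ y in Ioo t c, |f y|) + ∫ x in Ioo u c, |f x| :=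
        add_le_add_left (setIntegral_mono_ae_restrict
          (hft.mono_set (Ioo_subset_Ioo_right huc)).abs
          (integrableOn_const measure_Ioo_lt_top.ne) hbd_tu) _
    _ = C * (u - t) * (∫ x in Ioo t c, |f x|) + ∫ x in Ioo u c, |f x| := by
        rw [setIntegral_const, Real.volume_real_Ioo_of_le htu, smul_eq_mul]
        ring

theorem ae_restrict_Ioo_eq_zero_of_abs_le (hC : 0 ≤ C) (hf : IntegrableOn f (Ioo a c))
    (hbd : ∀ᵐ x ∂volume.restrict (Ioo a c), |f x| ≤ C * ∫ y in Ioo x c, |f y|) :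
    ∀ᵐ x ∂volume.restrict (Ioo a c), f x = 0 := by
  obtain ⟨δ, hδ, hCδ⟩ : ∃ δ > 0, C * δ < 1 :=
    ⟨1 / (C + 1), by positivity, by rw [mul_one_div, div_lt_one (by positivity)]; linarith⟩
  have hvanish : ∀ n : ℕ, ∀ t ∈ Icc a c, c - n * δ ≤ t → ∫ x in Ioo t c, |f x| = 0 := by
    intro n
    induction n with
    | zero =>
      intro t ht hct
      simp [le_antisymm ht.2 (by simpa using hct)]
    | succ n ih =>
      intro t ht hct
      set u := min c (t + δ)
      have htu : t ≤ u := le_min ht.2 (by linarith)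
      have hu : ∫ x in Ioo u c, |f x| = 0 :=
        ih u ⟨ht.1.trans htu, min_le_left _ _⟩ (by
          push_cast at hct; exact le_min (by nlinarith) (by linarith))
      have hstep := setIntegral_abs_Ioo_le_of_abs_le hC hf hbd ht.1 htu (min_le_left _ _)
      have hnonneg : 0 ≤ ∫ x in Ioo t c, |f x| :=
        setIntegral_nonneg measurableSet_Ioo fun _ _ => abs_nonneg _
      have hut : C * (u - t) ≤ C * δ := by gcongr; linarith [min_le_right c (t + δ)]
      rw [hu] at hstep
      nlinarith
  rcases le_total c a with hca | hac
  · simp [Ioo_eq_empty_of_le hca]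
  obtain ⟨n, hn⟩ := exists_nat_ge ((c - a) / δ)
  have hzero := hvanish n a ⟨le_rfl, hac⟩ (by rw [div_le_iff₀ hδ] at hn; linarith)
  rw [setIntegral_eq_zero_iff_of_nonneg_ae (ae_of_all _ fun _ => abs_nonneg _) hf.abs] at hzero
  filter_upwards [hzero] with x hx
  simpa using hx

end Volterra

theorem ae_restrict_Ioo_of_ae_restrict_Ioo_of_ae_restrict_Ioo {μ : Measure ℝ} [NullSingletonClass μ]
    {p : ℝ → Prop} {a m c : ℝ} (h₁ : ∀ᵐ x ∂μ.restrict (Ioo a m), p x)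
    (h₂ : ∀ᵐ x ∂μ.restrict (Ioo m c), p x) : ∀ᵐ x ∂μ.restrict (Ioo a c), p x := by
  rw [ae_restrict_iff' measurableSet_Ioo] at h₁ h₂ ⊢
  filter_upwards [h₁, h₂, μ.ae_ne m] with x h₁ h₂ hm hx
  rcases hm.lt_or_gt with h | h
  exacts [h₁ ⟨hx.1, h⟩, h₂ ⟨h, hx.2⟩]

theorem abs_setIntegral_mul_le {α : Type*} [MeasurableSpace α] {μ : Measure α} {s : Set α}
    {k g : α → ℝ} {M : ℝ} (hg : IntegrableOn g s μ) (hk : ∀ x, |k x| ≤ M) :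
    |∫ x in s, k x * g x ∂μ| ≤ M * ∫ x in s, |g x| ∂μ := by
  rw [← integral_const_mul M (fun x => |g x|), ← Real.norm_eq_abs]
  refine norm_integral_le_of_norm_le (hg.abs.const_mul M) (ae_of_all _ fun x => ?_)
  rw [Real.norm_eq_abs, abs_mul]
  exact mul_le_mul_of_nonneg_right (hk x) (abs_nonneg _)

theorem ae_abs_le_of_add_setIntegral_eq_zero {F Q : ℝ → ℝ} {K : ℝ → ℝ → ℝ} {a b M : ℝ}
    (hQ : IntegrableOn Q (Ioo a b)) (hK : ∀ x t, |K x t| ≤ M)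
    (heq : ∀ᵐ t ∂volume.restrict (Ioo a b), F t + ∫ x in Ioo t b, K x t * Q x = 0) :
    ∀ᵐ t ∂volume.restrict (Ioo a b), |F t| ≤ M * ∫ x in Ioo t b, |Q x| := by
  rw [ae_restrict_iff' measurableSet_Ioo] at heq ⊢
  filter_upwards [heq] with t ht hmem
  rw [eq_neg_of_add_eq_zero_left (ht hmem), abs_neg]
  exact abs_setIntegral_mul_le (hQ.mono_set (Ioo_subset_Ioo_left hmem.1.le)) (hK · t)

noncomputable def piecewiseF (b A₂ A₃ A₄ : ℝ) (Q : ℝ → ℝ) (t : ℝ) : ℝ :=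
  if t ≤ 1 - b then Q t + 2 * A₃ * Q (t + 1/2)
  else if t ≤ b - 1/2 then Q t + 2 * A₃ * Q (t + 1/2) + 2 * A₄ * Q (1 - t)
  else if t ≤ 1/2 then Q t + 2 * A₄ * Q (1 - t)
  else 2 * A₂ * Q t

section PiecewiseF

variable {b A₂ A₃ A₄ M : ℝ} {Q : ℝ → ℝ}

theorem piecewiseF_of_half_lt (hb : b ∈ Icc (1/2) 1) {t : ℝ} (ht : 1/2 < t) :
    piecewiseF b A₂ A₃ A₄ Q t = 2 * A₂ * Q t := by
  rw [piecewiseF, if_neg (by linarith [hb.1]), if_neg (by linarith [hb.2]), if_neg ht.not_ge]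

theorem piecewiseF_of_le_half (hb : 3/4 ≤ b) {t : ℝ} (ht : t ∈ Icc 0 (1/2))
    (hshift : t + 1/2 ∈ Icc (1/2) b → Q (t + 1/2) = 0)
    (hrefl : 1 - t ∈ Icc (1/2) b → Q (1 - t) = 0) :
    piecewiseF b A₂ A₃ A₄ Q t = Q t := by
  obtain ⟨ht0, ht⟩ := ht
  unfold piecewiseF
  split_ifs
  · rw [hshift ⟨by linarith, by linarith⟩]; ring
  · rw [hshift ⟨by linarith, by linarith⟩, hrefl ⟨by linarith, by linarith⟩]; ring
  · rw [hrefl ⟨by linarith, by linarith⟩]; ring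

theorem ae_restrict_Ioo_half_eq_zero (hb : b ∈ Icc (1/2) 1) (hA₂ : A₂ ≠ 0) (hM : 0 ≤ M)
    (hQ : IntegrableOn Q (Ioo (1/2) b))
    (hF : ∀ᵐ t ∂volume.restrict (Ioo (1/2) b),
      |piecewiseF b A₂ A₃ A₄ Q t| ≤ M * ∫ x in Ioo t b, |Q x|) :
    ∀ᵐ t ∂volume.restrict (Ioo (1/2) b), Q t = 0 := by
  have hA : 0 < 2 * |A₂| := by positivity
  refine ae_restrict_Ioo_eq_zero_of_abs_le (C := M / (2 * |A₂|)) (by positivity) hQ ?_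
  rw [ae_restrict_iff' measurableSet_Ioo] at hF ⊢
  filter_upwards [hF] with t ht hmem
  have h := ht hmem
  rw [piecewiseF_of_half_lt hb hmem.1, abs_mul, abs_mul, abs_two] at h
  rw [div_mul_eq_mul_div, le_div_iff₀ hA]
  linarith

theorem ae_restrict_Ioo_zero_half_eq_zero (hb : 3/4 ≤ b) (hM : 0 ≤ M)
    (hQ : IntegrableOn Q (Ioo 0 b))
    (hupper : ∀ᵐ t ∂volume.restrict (Ioo (1/2) b), Q t = 0)
    (hF : ∀ᵐ t ∂volume.restrict (Ioo 0 (1/2)),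
      |piecewiseF b A₂ A₃ A₄ Q t| ≤ M * ∫ x in Ioo t b, |Q x|) :
    ∀ᵐ t ∂volume.restrict (Ioo 0 (1/2)), Q t = 0 := by
  have hupper' : ∀ᵐ x, x ∈ Icc (1/2 : ℝ) b → Q x = 0 :=
    (ae_restrict_iff' measurableSet_Icc).1 ((ae_restrict_congr_set Ioo_ae_eq_Icc).1 hupper)
  have hshift : ∀ᵐ t, t + 1/2 ∈ Icc (1/2 : ℝ) b → Q (t + 1/2) = 0 :=
    (measurePreserving_add_right volume (1/2 : ℝ)).quasiMeasurePreserving.ae hupper'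
  have hrefl : ∀ᵐ t, 1 - t ∈ Icc (1/2 : ℝ) b → Q (1 - t) = 0 :=
    (Measure.measurePreserving_sub_left volume (1 : ℝ)).quasiMeasurePreserving.ae hupper'
  have htail : ∫ x in Ioo (1/2) b, |Q x| = 0 :=
    integral_eq_zero_of_ae (hupper.mono fun x hx => by simp [hx])
  refine ae_restrict_Ioo_eq_zero_of_abs_le hM (hQ.mono_set (Ioo_subset_Ioo_right (by linarith)))
    ?_
  rw [ae_restrict_iff' measurableSet_Ioo] at hF ⊢
  filter_upwards [hF, hshift, hrefl] with t ht hshift hrefl hmem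
  have h := ht hmem
  rwa [piecewiseF_of_le_half hb (Ioo_subset_Icc_self hmem) hshift hrefl,
    ← setIntegral_Ioo_add_setIntegral_Ioo (hQ.mono_set (Ioo_subset_Ioo_left hmem.1.le)).abs
      hmem.2.le (by linarith), htail, add_zero] at h

end PiecewiseF

theorem piecewise_volterra_case_b_ge_general
    (b : ℝ) (hb : b ∈ Set.Icc (3/4 : ℝ) 1)
    (Q : ℝ → ℝ) (hQ : MemLp Q 2 (volume.restrict (Set.Ioo 0 b)))
    (K : ℝ → ℝ → ℝ)
    (M : ℝ) (hKbd : ∀ x t : ℝ, |K x t| ≤ M)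
    (A₂ A₃ A₄ : ℝ) (hA₂ : A₂ ≠ 0)
    (heq : ∀ᵐ t ∂(volume.restrict (Set.Ioo 0 b)),
      (if t ≤ 1 - b then Q t + 2 * A₃ * Q (t + 1/2)
       else if t ≤ b - 1/2 then Q t + 2 * A₃ * Q (t + 1/2) + 2 * A₄ * Q (1 - t)
       else if t ≤ 1/2 then Q t + 2 * A₄ * Q (1 - t)
       else 2 * A₂ * Q t) + ∫ x in Set.Ioo t b, K x t * Q x = 0) :
    ∀ᵐ t ∂(volume.restrict (Set.Ioo 0 b)), Q t = 0 := by
  obtain ⟨hb34, hb1⟩ := hb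
  have hM : 0 ≤ M := (abs_nonneg _).trans (hKbd 0 0)
  have hQint : IntegrableOn Q (Ioo 0 b) := hQ.integrable one_le_two
  have hF := ae_abs_le_of_add_setIntegral_eq_zero (F := piecewiseF b A₂ A₃ A₄ Q) hQint hKbd heq
  have hupper := ae_restrict_Ioo_half_eq_zero ⟨by linarith, hb1⟩ hA₂ hM
    (hQint.mono_set (Ioo_subset_Ioo_left (by norm_num)))
    (ae_restrict_of_ae_restrict_of_subset (Ioo_subset_Ioo_left (by norm_num)) hF)
  have hlower := ae_restrict_Ioo_zero_half_eq_zero hb34 hM hQint hupper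
    (ae_restrict_of_ae_restrict_of_subset (Ioo_subset_Ioo_right (by linarith)) hF)
  exact ae_restrict_Ioo_of_ae_restrict_Ioo_of_ae_restrict_Ioo hlower hupper

/-- The piecewise-reflection step of the proof of Lemma 3.1, case `b ∈ [3/4, 1]`:
if `F(t) + ∫_t^b K(x,t) Q(x) dx = 0` a.e. with the indicated piecewise `F`, then
`Q = 0` a.e. on `(0,b)`. -/
theorem piecewise_volterra_case_b_ge
    (b : ℝ) (hb : b ∈ Set.Icc (3/4 : ℝ) 1)
    (Q : ℝ → ℝ) (hQ : MemLp Q 2 (volume.restrict (Set.Ioo 0 b)))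
    (K : ℝ → ℝ → ℝ) (hKmeas : Measurable (Function.uncurry K))
    (M : ℝ) (hKbd : ∀ x t : ℝ, |K x t| ≤ M)
    (A₂ A₃ A₄ : ℝ) (hA₂ : A₂ ≠ 0)
    (heq : ∀ᵐ t ∂(volume.restrict (Set.Ioo 0 b)),
      (if t ≤ 1 - b then Q t + 2 * A₃ * Q (t + 1/2)
       else if t ≤ b - 1/2 then Q t + 2 * A₃ * Q (t + 1/2) + 2 * A₄ * Q (1 - t)
       else if t ≤ 1/2 then Q t + 2 * A₄ * Q (1 - t)
       else 2 * A₂ * Q t) + ∫ x in Set.Ioo t b, K x t * Q x = 0) :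
    ∀ᵐ t ∂(volume.restrict (Set.Ioo 0 b)), Q t = 0 :=
  piecewise_volterra_case_b_ge_general b hb Q hQ K M hKbd A₂ A₃ A₄ hA₂ heq
end

section
/- Let b ∈ (1/2, 3/4), let Q ∈ L²(0,b) be real-valued, let K : ℝ × ℝ → ℝ be measurable and bounded, and let A₂, A₃, A₄ ∈ ℝ with A₂ ≠ 0. Define F on [0,b] piecewise by: F(t) = Q(t) + 2A₃·Q(t + 1/2) for t ∈ [0, b − 1/2]; F(t) = Q(t) for t ∈ (b − 1/2, 1 − b]; F(t) = Q(t) + 2A₄·Q(1 − t) for t ∈ (1 − b, 1/2]; F(t) = 2A₂·Q(t) for t ∈ (1/2, b]. If F(t) + ∫_t^b K(x,t)·Q(x) dx = 0 for almost every t ∈ (0,b), then Q = 0 almost everywhere on (0,b). -/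
/-!
On `(1/2, b)` the equation reads `2 A₂ Q(t) + ∫_t^b K(x,t) Q(x) dx = 0` with `A₂ ≠ 0`, so
`|Q(t)| ≤ C ∫_t^b |Q|` there, and iterating this Volterra inequality gives
`∫_t^b |Q| ≤ ‖Q‖₁ (C (b - t))ⁿ / n! → 0`, so `Q` vanishes a.e. on `(1/2, b)`.
For `t ∈ (0, 1/2]` the points `t + 1/2` and `1 - t` coupled to `t` lie in `[1/2, b]`
whenever their coefficients are active, so the equation there collapses to
`Q(t) + ∫_t^b K(x,t) Q(x) dx = 0`, and the same Volterra argument on `(0, b)` finishes the proof.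
-/

open MeasureTheory Set Filter Topology
open scoped Nat

section Volterra

variable {a b C L : ℝ}

lemma integral_Ioo_sub_pow {t : ℝ} (htb : t ≤ b) (n : ℕ) :
    ∫ s in Ioo t b, (b - s) ^ n = (b - t) ^ (n + 1) / (n + 1) := by
  rw [← integral_Ioc_eq_integral_Ioo, ← intervalIntegral.integral_of_le htb,
    intervalIntegral.integral_comp_sub_left (· ^ n) b]
  simp [integral_pow]

lemma le_pow_div_factorial_of_le_mul_integral_Ioo {u : ℝ → ℝ} (hC : 0 ≤ C)
    (hu : IntegrableOn u (Icc a b)) (huL : ∀ t ∈ Icc a b, u t ≤ L)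
    (h : ∀ t ∈ Icc a b, u t ≤ C * ∫ s in Ioo t b, u s) (n : ℕ) :
    ∀ t ∈ Icc a b, u t ≤ L * (C * (b - t)) ^ n / n ! := by
  induction n with
  | zero => simpa using huL
  | succ n ih =>
    intro t ht
    have hsub : Ioo t b ⊆ Icc a b := Ioo_subset_Icc_self.trans (Icc_subset_Icc_left ht.1)
    have hbound : ∫ s in Ioo t b, u s ≤ ∫ s in Ioo t b, L * C ^ n / n ! * (b - s) ^ n := by
      refine setIntegral_mono_on (hu.mono_set hsub)
        ((Continuous.integrableOn_Icc (by fun_prop)).mono_set Ioo_subset_Icc_self)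
        measurableSet_Ioo fun s hs => ?_
      calc u s ≤ L * (C * (b - s)) ^ n / n ! := ih s (hsub hs)
        _ = L * C ^ n / n ! * (b - s) ^ n := by rw [mul_pow]; ring
    calc u t ≤ C * ∫ s in Ioo t b, u s := h t ht
      _ ≤ C * ∫ s in Ioo t b, L * C ^ n / n ! * (b - s) ^ n := by gcongr
      _ = L * (C * (b - t)) ^ (n + 1) / (n + 1)! := by
        rw [integral_const_mul, integral_Ioo_sub_pow ht.2, Nat.factorial_succ, mul_pow]
        push_cast
        field_simp
        ring

lemma nonpos_of_le_mul_integral_Ioo {u : ℝ → ℝ} (hC : 0 ≤ C)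
    (hu : IntegrableOn u (Icc a b)) (huL : ∀ t ∈ Icc a b, u t ≤ L)
    (h : ∀ t ∈ Icc a b, u t ≤ C * ∫ s in Ioo t b, u s) {t : ℝ} (ht : t ∈ Icc a b) :
    u t ≤ 0 := by
  have hlim : Tendsto (fun n : ℕ => L * (C * (b - t)) ^ n / n !) atTop (𝓝 0) := by
    simpa [mul_div_assoc] using
      (FloorSemiring.tendsto_pow_div_factorial_atTop (C * (b - t))).const_mul L
  exact ge_of_tendsto' hlim fun n => le_pow_div_factorial_of_le_mul_integral_Ioo hC hu huL h n t ht

theorem ae_eq_zero_of_norm_le_mul_integral_Ioo {E : Type*} [NormedAddCommGroup E] {f : ℝ → E}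
    (hC : 0 ≤ C) (hf : IntegrableOn f (Ioo a b))
    (h : ∀ᵐ s ∂volume.restrict (Ioo a b), ‖f s‖ ≤ C * ∫ x in Ioo s b, ‖f x‖) :
    ∀ᵐ s ∂volume.restrict (Ioo a b), f s = 0 := by
  set u : ℝ → ℝ := fun t => ∫ x in Ioo t b, ‖f x‖
  have hfn : IntegrableOn (fun x => ‖f x‖) (Ioo a b) := hf.norm
  have hsub {t : ℝ} (ht : a ≤ t) : Ioo t b ⊆ Ioo a b := Ioo_subset_Ioo_left ht
  have hu_le {t₁ t₂ : ℝ} (h₁ : a ≤ t₁) (h₁₂ : t₁ ≤ t₂) : u t₂ ≤ u t₁ :=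
    setIntegral_mono_set (hfn.mono_set (hsub h₁)) (ae_of_all _ fun _ => norm_nonneg _)
      (Ioo_subset_Ioo_left h₁₂).eventuallyLE
  have hu : IntegrableOn u (Icc a b) :=
    AntitoneOn.integrableOn_isCompact isCompact_Icc fun _ h₁ _ _ h₁₂ => hu_le h₁.1 h₁₂
  have hvolterra : ∀ t ∈ Icc a b, u t ≤ C * ∫ s in Ioo t b, u s := fun t ht => calc
    u t ≤ ∫ s in Ioo t b, C * u s :=
      integral_mono_ae (hfn.mono_set (hsub ht.1))
        ((hu.mono_set (Ioo_subset_Icc_self.trans (Icc_subset_Icc_left ht.1))).const_mul C)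
        (ae_restrict_of_ae_restrict_of_subset (hsub ht.1) h)
    _ = C * ∫ s in Ioo t b, u s := integral_const_mul C _
  have hua : u a = 0 := by
    rcases le_or_gt a b with hab | hba
    · exact le_antisymm
        (nonpos_of_le_mul_integral_Ioo hC hu (fun t ht => hu_le le_rfl ht.1) hvolterra
          ⟨le_rfl, hab⟩)
        (setIntegral_nonneg measurableSet_Ioo fun _ _ => norm_nonneg _)
    · simp [u, Ioo_eq_empty_of_le hba.le]
  filter_upwards [(integral_eq_zero_iff_of_nonneg (fun _ => norm_nonneg _) hfn).1 hua]
    with s hs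
  exact norm_eq_zero.1 hs

theorem ae_eq_zero_of_abs_mul_le_mul_integral_Ioo {f : ℝ → ℝ} {c M : ℝ} (hc : c ≠ 0)
    (hM : 0 ≤ M) (hf : IntegrableOn f (Ioo a b))
    (h : ∀ᵐ s ∂volume.restrict (Ioo a b), |c * f s| ≤ M * ∫ x in Ioo s b, |f x|) :
    ∀ᵐ s ∂volume.restrict (Ioo a b), f s = 0 := by
  refine ae_eq_zero_of_norm_le_mul_integral_Ioo (C := M / |c|) (by positivity) hf ?_
  filter_upwards [h] with s hs
  rw [abs_mul] at hs
  simp only [Real.norm_eq_abs]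
  rw [div_mul_eq_mul_div, le_div_iff₀ (abs_pos.2 hc), mul_comm]
  exact hs

end Volterra

lemma abs_integral_mul_le_of_abs_le {α : Type*} [MeasurableSpace α] {μ : Measure α}
    {k f : α → ℝ} {M : ℝ} (hf : Integrable f μ) (hk : ∀ x, |k x| ≤ M) :
    |∫ x, k x * f x ∂μ| ≤ M * ∫ x, |f x| ∂μ := by
  calc |∫ x, k x * f x ∂μ| ≤ ∫ x, M * |f x| ∂μ :=
        norm_integral_le_of_norm_le (hf.abs.const_mul M) <| ae_of_all _ fun x => by
          rw [Real.norm_eq_abs, abs_mul]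
          exact mul_le_mul_of_nonneg_right (hk x) (abs_nonneg _)
    _ = M * ∫ x, |f x| ∂μ := integral_const_mul M _

/-- The function `F` of the equation `F(t) + ∫_t^b K(x,t) Q(x) dx = 0`. -/
noncomputable def piecewiseCombination (b A₂ A₃ A₄ : ℝ) (Q : ℝ → ℝ) (t : ℝ) : ℝ :=
  if t ≤ b - 1/2 then Q t + 2 * A₃ * Q (t + 1/2)
  else if t ≤ 1 - b then Q t
  else if t ≤ 1/2 then Q t + 2 * A₄ * Q (1 - t)
  else 2 * A₂ * Q t

section piecewiseCombination

variable {b A₂ A₃ A₄ t : ℝ} {Q : ℝ → ℝ}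

lemma piecewiseCombination_of_half_lt (hb : b ∈ Icc (1/2 : ℝ) 1) (ht : 1/2 < t) :
    piecewiseCombination b A₂ A₃ A₄ Q t = 2 * A₂ * Q t := by
  rw [piecewiseCombination, if_neg (by linarith [hb.2]), if_neg (by linarith [hb.1]),
    if_neg ht.not_ge]

lemma piecewiseCombination_of_le_half (ht : t ≤ 1/2)
    (hshift : t ≤ b - 1/2 → Q (t + 1/2) = 0) (hrefl : 1 - b < t → Q (1 - t) = 0) :
    piecewiseCombination b A₂ A₃ A₄ Q t = Q t := by
  unfold piecewiseCombination
  split_ifs with h₁ h₂ <;> simp_all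

end piecewiseCombination

theorem piecewise_volterra_case_b_lt_general
    (b : ℝ) (hb : b ∈ Set.Ioo (1/2 : ℝ) (3/4))
    (Q : ℝ → ℝ) (hQ : MemLp Q 2 (volume.restrict (Set.Ioo 0 b)))
    (K : ℝ → ℝ → ℝ)
    (M : ℝ) (hKbd : ∀ x t : ℝ, |K x t| ≤ M)
    (A₂ A₃ A₄ : ℝ) (hA₂ : A₂ ≠ 0)
    (heq : ∀ᵐ t ∂(volume.restrict (Set.Ioo 0 b)),
      (if t ≤ b - 1/2 then Q t + 2 * A₃ * Q (t + 1/2)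
       else if t ≤ 1 - b then Q t
       else if t ≤ 1/2 then Q t + 2 * A₄ * Q (1 - t)
       else 2 * A₂ * Q t) + ∫ x in Set.Ioo t b, K x t * Q x = 0) :
    ∀ᵐ t ∂(volume.restrict (Set.Ioo 0 b)), Q t = 0 := by
  have hb' : b ∈ Icc (1/2 : ℝ) 1 := ⟨hb.1.le, by linarith [hb.2]⟩
  have hQint : IntegrableOn Q (Ioo 0 b) := hQ.integrable one_le_two
  have hM : 0 ≤ M := (abs_nonneg _).trans (hKbd 0 0)
  have hF : ∀ᵐ t ∂volume.restrict (Ioo 0 b),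
      |piecewiseCombination b A₂ A₃ A₄ Q t| ≤ M * ∫ x in Ioo t b, |Q x| := by
    filter_upwards [heq, ae_restrict_mem measurableSet_Ioo] with t ht hmem
    change piecewiseCombination b A₂ A₃ A₄ Q t + _ = 0 at ht
    rw [eq_neg_of_add_eq_zero_left ht, abs_neg]
    exact abs_integral_mul_le_of_abs_le (hQint.mono_set (Ioo_subset_Ioo_left hmem.1.le))
      (hKbd · t)
  have hupper : ∀ᵐ x, x ∈ Icc (1/2 : ℝ) b → Q x = 0 := by
    have hsub : Ioo (1/2 : ℝ) b ⊆ Ioo 0 b := Ioo_subset_Ioo_left (by norm_num)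
    refine (ae_restrict_iff' measurableSet_Icc).1 <| (ae_restrict_congr_set Ioo_ae_eq_Icc).1 <|
      ae_eq_zero_of_abs_mul_le_mul_integral_Ioo (mul_ne_zero two_ne_zero hA₂) hM
        (hQint.mono_set hsub) ?_
    filter_upwards [ae_restrict_of_ae_restrict_of_subset hsub hF,
      ae_restrict_mem measurableSet_Ioo] with t ht hmem
    rwa [piecewiseCombination_of_half_lt hb' hmem.1] at ht
  have hshift := (measurePreserving_add_right volume (1/2 : ℝ)).quasiMeasurePreserving.ae hupper
  have hrefl := (Measure.measurePreserving_sub_left volume 1).quasiMeasurePreserving.ae hupper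
  refine ae_eq_zero_of_abs_mul_le_mul_integral_Ioo one_ne_zero hM hQint ?_
  filter_upwards [hF, ae_restrict_of_ae hupper, ae_restrict_of_ae hshift,
    ae_restrict_of_ae hrefl, ae_restrict_mem measurableSet_Ioo]
    with t ht hQt hQshift hQrefl hmem
  rw [one_mul]
  rcases le_or_gt t (1/2) with hle | hlt
  · rwa [piecewiseCombination_of_le_half hle
      (fun h : t ≤ b - 1/2 => hQshift ⟨by linarith [hmem.1], by linarith⟩)
      (fun h : 1 - b < t => hQrefl ⟨by linarith, by linarith⟩)] at ht
  · rw [hQt ⟨hlt.le, hmem.2.le⟩, abs_zero]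
    exact mul_nonneg hM (setIntegral_nonneg measurableSet_Ioo fun _ _ => abs_nonneg _)

/-- The piecewise-reflection step of the proof of Lemma 3.1, case `b ∈ (1/2, 3/4)`:
if `F(t) + ∫_t^b K(x,t) Q(x) dx = 0` a.e. with the indicated piecewise `F`, then
`Q = 0` a.e. on `(0,b)`. -/
theorem piecewise_volterra_case_b_lt
    (b : ℝ) (hb : b ∈ Set.Ioo (1/2 : ℝ) (3/4))
    (Q : ℝ → ℝ) (hQ : MemLp Q 2 (volume.restrict (Set.Ioo 0 b)))
    (K : ℝ → ℝ → ℝ) (hKmeas : Measurable (Function.uncurry K))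
    (M : ℝ) (hKbd : ∀ x t : ℝ, |K x t| ≤ M)
    (A₂ A₃ A₄ : ℝ) (hA₂ : A₂ ≠ 0)
    (heq : ∀ᵐ t ∂(volume.restrict (Set.Ioo 0 b)),
      (if t ≤ b - 1/2 then Q t + 2 * A₃ * Q (t + 1/2)
       else if t ≤ 1 - b then Q t
       else if t ≤ 1/2 then Q t + 2 * A₄ * Q (1 - t)
       else 2 * A₂ * Q t) + ∫ x in Set.Ioo t b, K x t * Q x = 0) :
    ∀ᵐ t ∂(volume.restrict (Set.Ioo 0 b)), Q t = 0 :=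
  piecewise_volterra_case_b_lt_general b hb Q hQ K M hKbd A₂ A₃ A₄ hA₂ heq
end

section
/- For every σ > 0 there exists M > 0 such that for every real t with |t| ≥ 1, writing z = (it)^{1/2} for the principal square root of it, one has |sin(σ·z)| ≥ M·exp(σ·|Im z|) and |cos(σ·z)| ≥ M·exp(σ·|Im z|). -/
/-!
Since `e^{±iw}` have moduli `e^{∓ Im w}`, the reverse triangle inequality gives
`|sin w|, |cos w| ≥ sinh |Im w|`, and `sinh y ≥ c_a e^y` for `y ≥ a` with `c_a = sinh a · e^{-a} > 0`.
For `z = √(it)` one has `(Im z)² = |t|/2 ≥ 1/2`, so `y = σ |Im z| ≥ σ/√2 =: a` and `M = c_a` works.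
-/

open Complex

namespace Complex

lemma norm_exp_mul_I (w : ℂ) : ‖exp (w * I)‖ = Real.exp (-w.im) := by
  rw [norm_exp, mul_I_re]

lemma norm_exp_neg_mul_I (w : ℂ) : ‖exp (-w * I)‖ = Real.exp w.im := by
  rw [norm_exp_mul_I, neg_im, neg_neg]

lemma sinh_abs_im_le_half_norm_exp_neg_mul_I_sub {w : ℂ} {ε : ℂ} (hε : ‖ε‖ = 1) :
    Real.sinh |w.im| ≤ ‖exp (-w * I) - ε * exp (w * I)‖ / 2 := by
  have h := abs_norm_sub_norm_le (exp (-w * I)) (ε * exp (w * I))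
  rw [norm_mul, hε, one_mul, norm_exp_neg_mul_I, norm_exp_mul_I] at h
  rw [← Real.abs_sinh, Real.sinh_eq, abs_div, abs_two]
  linarith

lemma sinh_abs_im_le_norm_sin (w : ℂ) : Real.sinh |w.im| ≤ ‖sin w‖ := by
  have h := sinh_abs_im_le_half_norm_exp_neg_mul_I_sub (w := w) (ε := 1) norm_one
  rwa [one_mul, show ‖exp (-w * I) - exp (w * I)‖ / 2 = ‖sin w‖ by simp [sin]] at h

lemma sinh_abs_im_le_norm_cos (w : ℂ) : Real.sinh |w.im| ≤ ‖cos w‖ := by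
  have h := sinh_abs_im_le_half_norm_exp_neg_mul_I_sub (w := w) (ε := -1) (by simp)
  rwa [neg_one_mul, sub_neg_eq_add,
    show ‖exp (-w * I) + exp (w * I)‖ / 2 = ‖cos w‖ by simp [cos, add_comm]] at h

lemma im_sq_eq_abs_div_two_of_sq_eq_I_mul {z : ℂ} {t : ℝ} (hz : z ^ 2 = I * t) :
    z.im ^ 2 = |t| / 2 := by
  have hre : z.re ^ 2 - z.im ^ 2 = 0 := by simpa [sq] using congrArg re hz
  have him : 2 * z.re * z.im = t := by
    have := congrArg im hz
    simp only [sq, mul_im, I_im, ofReal_re, one_mul, I_re, ofReal_im, mul_zero] at this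
    linarith
  have hnorm : z.re ^ 2 + z.im ^ 2 = |t| := by
    rw [← sq_eq_sq₀ (by positivity) (abs_nonneg t), sq_abs, ← him]
    linear_combination (z.re ^ 2 - z.im ^ 2) * hre
  linarith

end Complex

namespace Real

lemma monotone_sinh_mul_exp_neg : Monotone fun y : ℝ => sinh y * exp (-y) := by
  have h (y : ℝ) : sinh y * exp (-y) = (1 - exp (-2 * y)) / 2 := by
    rw [sinh_eq, div_mul_eq_mul_div, sub_mul, ← exp_add, ← exp_add, add_neg_cancel, exp_zero]
    ring_nf
  intro a b hab
  simp only [h]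
  gcongr (1 - ?_) / 2
  exact exp_le_exp.2 (by linarith)

lemma sinh_mul_exp_neg_mul_exp_le_sinh {a y : ℝ} (h : a ≤ y) :
    sinh a * exp (-a) * exp y ≤ sinh y := by
  calc sinh a * exp (-a) * exp y ≤ sinh y * exp (-y) * exp y :=
        mul_le_mul_of_nonneg_right (monotone_sinh_mul_exp_neg h) (exp_pos y).le
    _ = sinh y := by rw [mul_assoc, ← exp_add, neg_add_cancel, exp_zero, mul_one]

end Real

/-- Lower bounds for `|sin(σz)|` and `|cos(σz)|` with `z = √(it)`, `|t| ≥ 1`, used for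
estimating canonical products on the imaginary axis. -/
theorem sin_cos_lower_bound_on_sqrt_imaginary_axis :
    ∀ σ : ℝ, 0 < σ → ∃ M : ℝ, 0 < M ∧ ∀ t : ℝ, 1 ≤ |t| →
      M * Real.exp (σ * |((I * (t : ℂ)) ^ (1/2 : ℂ)).im|) ≤
          ‖Complex.sin ((σ : ℂ) * (I * (t : ℂ)) ^ (1/2 : ℂ))‖ ∧
        M * Real.exp (σ * |((I * (t : ℂ)) ^ (1/2 : ℂ)).im|) ≤
          ‖Complex.cos ((σ : ℂ) * (I * (t : ℂ)) ^ (1/2 : ℂ))‖ := by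
  intro σ hσ
  set a := σ * √(1 / 2)
  have ha : 0 < a := by positivity
  refine ⟨Real.sinh a * Real.exp (-a), by have := Real.sinh_pos_iff.2 ha; positivity, ?_⟩
  intro t ht
  set z := (I * (t : ℂ)) ^ (1 / 2 : ℂ)
  have hz : √(1 / 2) ≤ |z.im| := by
    rw [← Real.sqrt_sq_eq_abs, im_sq_eq_abs_div_two_of_sq_eq_I_mul (t := t) (by simp [z])]
    gcongr
  have key : Real.sinh a * Real.exp (-a) * Real.exp (σ * |z.im|) ≤
      Real.sinh |((σ : ℂ) * z).im| := by
    rw [im_ofReal_mul, abs_mul, abs_of_pos hσ]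
    exact Real.sinh_mul_exp_neg_mul_exp_le_sinh (mul_le_mul_of_nonneg_left hz hσ.le)
  exact ⟨key.trans (sinh_abs_im_le_norm_sin _), key.trans (sinh_abs_im_le_norm_cos _)⟩
end

section
/- Let κ : ℕ → ℂ be a sequence of nonzero complex numbers for which there exists c > 0 with |κ(n)| ≥ c·(n+1)² for all n ∈ ℕ. Then: (1) for every λ ∈ ℂ the family (1 − λ/κ(n))_{n∈ℕ} is multipliable; (2) the function Φ(λ) = ∏'_{n∈ℕ} (1 − λ/κ(n)) is entire (complex differentiable on all of ℂ); and (3) for every p > 1/2 there exists a constant C > 0 such that |Φ(λ)| ≤ C·exp(|λ|^p) for all λ ∈ ℂ, i.e. Φ has order at most 1/2. -/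
/-!
Since `‖κ n‖⁻¹` is summable, the partial products converge locally uniformly, so the product
converges and is entire. For the growth bound, `1 + x ≤ exp (x ^ q)` for `x ≥ 0` and
`1/2 ≤ q ≤ 1`, whence `‖Φ λ‖ ≤ exp (Z_q ‖λ‖ ^ q)` with `Z_q = ∑ ‖κ n‖ ^ (-q)`, finite for `q > 1/2`
by the quadratic growth of `κ`. Taking `1/2 < q < p`, Young's inequality bounds `Z_q ‖λ‖ ^ q` by
`B + ‖λ‖ ^ p`.
-/

open Real

lemma norm_tprod_le_exp_tsum {ι R : Type*} [NormedCommRing R] [NormOneClass R] {u : ι → R}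
    {g : ι → ℝ} (hu : Multipliable u) (hg : Summable g) (h : ∀ i, ‖u i‖ ≤ exp (g i)) :
    ‖∏' i, u i‖ ≤ exp (∑' i, g i) := by
  refine le_of_tendsto_of_tendsto' ((continuous_norm.tendsto _).comp hu.hasProd)
    ((continuous_exp.tendsto _).comp hg.hasSum) fun s => ?_
  calc ‖∏ i ∈ s, u i‖ ≤ ∏ i ∈ s, ‖u i‖ := s.norm_prod_le u
    _ ≤ ∏ i ∈ s, exp (g i) := Finset.prod_le_prod (fun i _ => norm_nonneg _) fun i _ => h i
    _ = exp (∑ i ∈ s, g i) := (exp_sum s g).symm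

-- `exp s ≥ 1 + s + s²/2 + s³/6`, and `s²/2 ≤ s + s³/6` because `s² - 3s + 6 > 0`.
lemma one_add_sq_le_exp {s : ℝ} (hs : 0 ≤ s) : 1 + s ^ 2 ≤ exp s := by
  have h := sum_le_exp_of_nonneg hs 4
  simp only [Finset.sum_range_succ, Finset.sum_range_zero, Nat.factorial] at h
  nlinarith [mul_nonneg hs (sq_nonneg (s - 3 / 2))]

lemma one_add_le_exp_rpow {x q : ℝ} (hx : 0 ≤ x) (hq : 1 / 2 ≤ q) (hq1 : q ≤ 1) :
    1 + x ≤ exp (x ^ q) := by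
  rcases le_total x 1 with hx1 | hx1
  · calc 1 + x ≤ x ^ q + 1 := by linarith [self_le_rpow_of_le_one hx hx1 hq1]
      _ ≤ exp (x ^ q) := add_one_le_exp _
  · calc 1 + x = 1 + sqrt x ^ 2 := by rw [sq_sqrt hx]
      _ ≤ exp (sqrt x) := one_add_sq_le_exp (sqrt_nonneg x)
      _ ≤ exp (x ^ q) := by
        rw [exp_le_exp, sqrt_eq_rpow]
        exact rpow_le_rpow_of_exponent_le hx1 hq

lemma exists_mul_rpow_le_add_rpow {K q p : ℝ} (hK : 0 ≤ K) (hq : 0 < q) (hqp : q < p) :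
    ∃ B, ∀ r, 0 ≤ r → K * r ^ q ≤ B + r ^ p := by
  have hpq : (p / q).HolderConjugate (p / q).conjExponent :=
    .conjExponent ((one_lt_div hq).2 hqp)
  refine ⟨K ^ (p / q).conjExponent / (p / q).conjExponent, fun r hr => ?_⟩
  have hrp : (r ^ q) ^ (p / q) = r ^ p := by
    rw [← rpow_mul hr, mul_div_cancel₀ _ hq.ne']
  calc K * r ^ q
      ≤ K ^ (p / q).conjExponent / (p / q).conjExponent + (r ^ q) ^ (p / q) / (p / q) := by
        simpa only [mul_comm, add_comm] using
          young_inequality_of_nonneg (rpow_nonneg hr q) hK hpq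
    _ ≤ _ := by
      rw [hrp]
      gcongr
      exact div_le_self (rpow_nonneg hr p) ((one_lt_div hq).2 hqp).le

lemma summable_inv_rpow_of_sq_le {a : ℕ → ℝ} {c q : ℝ} (hc : 0 < c)
    (ha : ∀ n : ℕ, c * ((n : ℝ) + 1) ^ 2 ≤ a n) (hq : 1 / 2 < q) :
    Summable fun n => (a n)⁻¹ ^ q := by
  have hpos (n : ℕ) : 0 < c * ((n : ℝ) + 1) ^ 2 := by positivity
  have ha_inv_nonneg (n : ℕ) : 0 ≤ (a n)⁻¹ := (inv_pos.2 ((hpos n).trans_le (ha n))).le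
  have hbound (n : ℕ) : (a n)⁻¹ ^ q ≤ (c ^ q)⁻¹ * (((n + 1 : ℕ) : ℝ) ^ (2 * q))⁻¹ :=
    calc (a n)⁻¹ ^ q ≤ (c * ((n : ℝ) + 1) ^ 2)⁻¹ ^ q := by
          gcongr
          exacts [ha_inv_nonneg n, ha n]
      _ = _ := by
          rw [inv_rpow (hpos n).le, mul_rpow hc.le (by positivity), mul_inv, Nat.cast_succ,
            ← rpow_natCast, ← rpow_mul (by positivity)]
          ring_nf
  have hp : Summable fun n : ℕ => (((n + 1 : ℕ) : ℝ) ^ (2 * q))⁻¹ :=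
    (summable_nat_add_iff 1).2 (summable_nat_rpow_inv.2 (by linarith))
  exact .of_nonneg_of_le (fun n => rpow_nonneg (ha_inv_nonneg n) q) hbound (hp.mul_left _)

section CanonicalProduct

variable {κ : ℕ → ℂ}

lemma summable_norm_neg_div (hκ : Summable fun n => ‖κ n‖⁻¹) (lam : ℂ) :
    Summable fun n => ‖-(lam / κ n)‖ := by
  simpa only [norm_neg, norm_div, div_eq_mul_inv, norm_mul, norm_inv] using hκ.mul_left ‖lam‖

lemma multipliable_one_sub_div (hκ : Summable fun n => ‖κ n‖⁻¹) (lam : ℂ) :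
    Multipliable fun n => 1 - lam / κ n := by
  simpa only [sub_eq_add_neg] using multipliable_one_add_of_summable (summable_norm_neg_div hκ lam)

lemma differentiable_tprod_one_sub_div (hκ : Summable fun n => ‖κ n‖⁻¹) :
    Differentiable ℂ fun lam => ∏' n, (1 - lam / κ n) := by
  intro z
  have hz : z ∈ Metric.ball (0 : ℂ) (‖z‖ + 1) := by simp
  have hprod : HasProdLocallyUniformlyOn (fun n lam => 1 + -(lam / κ n))
      (fun lam => ∏' n, (1 + -(lam / κ n))) (Metric.ball 0 (‖z‖ + 1)) := by
    refine (hκ.mul_left (‖z‖ + 1)).hasProdLocallyUniformlyOn_nat_one_add Metric.isOpen_ball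
      (.of_forall fun n lam hlam => ?_) fun n => by fun_prop
    rw [norm_neg, norm_div, div_eq_mul_inv]
    gcongr
    simpa using (mem_ball_zero_iff.1 hlam).le
  have hdiff := hprod.differentiableOn (.of_forall fun s => by fun_prop) Metric.isOpen_ball
  simp only [← sub_eq_add_neg] at hdiff
  exact hdiff.differentiableAt (Metric.isOpen_ball.mem_nhds hz)

lemma norm_tprod_one_sub_div_le {q : ℝ} (hq : 1 / 2 ≤ q) (hq1 : q ≤ 1)
    (hκ : Summable fun n => ‖κ n‖⁻¹) (hκq : Summable fun n => ‖κ n‖⁻¹ ^ q) (lam : ℂ) :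
    ‖∏' n, (1 - lam / κ n)‖ ≤ exp ((∑' n, ‖κ n‖⁻¹ ^ q) * ‖lam‖ ^ q) := by
  rw [← tsum_mul_right]
  refine norm_tprod_le_exp_tsum (multipliable_one_sub_div hκ lam) (hκq.mul_right _) fun n => ?_
  calc ‖1 - lam / κ n‖ ≤ 1 + ‖lam‖ * ‖κ n‖⁻¹ :=
        (norm_sub_le _ _).trans_eq (by rw [norm_one, norm_div, div_eq_mul_inv])
    _ ≤ exp ((‖lam‖ * ‖κ n‖⁻¹) ^ q) := one_add_le_exp_rpow (by positivity) hq hq1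
    _ = exp (‖κ n‖⁻¹ ^ q * ‖lam‖ ^ q) := by
        rw [mul_rpow (norm_nonneg _) (by positivity), mul_comm]

end CanonicalProduct

theorem canonical_product_order_half_general
    (κ : ℕ → ℂ)
    (c : ℝ) (hc : 0 < c) (hκ : ∀ n : ℕ, c * ((n : ℝ) + 1) ^ 2 ≤ ‖κ n‖) :
    (∀ lam : ℂ, Multipliable fun n : ℕ => 1 - lam / κ n) ∧
    Differentiable ℂ (fun lam : ℂ => ∏' n : ℕ, (1 - lam / κ n)) ∧
    ∀ p : ℝ, 1/2 < p → ∃ C : ℝ, 0 < C ∧ ∀ lam : ℂ,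
      ‖∏' n : ℕ, (1 - lam / κ n)‖ ≤ C * Real.exp (‖lam‖ ^ p) := by
  have hsum (q : ℝ) (hq : 1 / 2 < q) : Summable fun n => ‖κ n‖⁻¹ ^ q :=
    summable_inv_rpow_of_sq_le hc hκ hq
  have hsum_one : Summable fun n => ‖κ n‖⁻¹ := by simpa using hsum 1 (by norm_num)
  refine ⟨multipliable_one_sub_div hsum_one, differentiable_tprod_one_sub_div hsum_one,
    fun p hp => ?_⟩
  obtain ⟨q, hq, hq_lt⟩ := exists_between (lt_min hp one_half_lt_one)
  obtain ⟨B, hB⟩ := exists_mul_rpow_le_add_rpow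
    (tsum_nonneg fun n => by positivity : 0 ≤ ∑' n, ‖κ n‖⁻¹ ^ q)
    (one_half_pos.trans hq) (hq_lt.trans_le (min_le_left p 1))
  refine ⟨exp B, exp_pos B, fun lam => ?_⟩
  calc ‖∏' n, (1 - lam / κ n)‖ ≤ exp ((∑' n, ‖κ n‖⁻¹ ^ q) * ‖lam‖ ^ q) :=
        norm_tprod_one_sub_div_le hq.le (hq_lt.trans_le (min_le_right p 1)).le hsum_one
          (hsum q hq) lam
    _ ≤ exp (B + ‖lam‖ ^ p) := exp_le_exp.2 (hB _ (norm_nonneg lam))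
    _ = exp B * exp (‖lam‖ ^ p) := exp_add _ _

/-- Canonical products over a sequence with `1/κ_n = O(1/n²)`: the product
`Φ(λ) = ∏' (1 - λ/κ_n)` converges, is entire, and has order at most `1/2`. -/
theorem canonical_product_order_half
    (κ : ℕ → ℂ) (hκ0 : ∀ n, κ n ≠ 0)
    (c : ℝ) (hc : 0 < c) (hκ : ∀ n : ℕ, c * ((n : ℝ) + 1) ^ 2 ≤ ‖κ n‖) :
    (∀ lam : ℂ, Multipliable fun n : ℕ => 1 - lam / κ n) ∧
    Differentiable ℂ (fun lam : ℂ => ∏' n : ℕ, (1 - lam / κ n)) ∧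
    ∀ p : ℝ, 1/2 < p → ∃ C : ℝ, 0 < C ∧ ∀ lam : ℂ,
      ‖∏' n : ℕ, (1 - lam / κ n)‖ ≤ C * Real.exp (‖lam‖ ^ p) :=
  canonical_product_order_half_general κ c hc hκ
end

section
/- Let a ∈ (−1,1) and set γ_n = (n + 1/2)π + (−1)ⁿ·arcsin a for n ∈ ℕ. Then for every z ∈ ℂ the family (1 − z²/γ_n²)_{n∈ℕ} is multipliable and cos z + a = (1 + a)·∏'_{n=0}^∞ (1 − z²/γ_n²). -/
/-!
The zeros of `cos z - cos b` are `±b + 2πk`. Pairing the zeros `2(k+1)π ∓ b` and using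
`cos z - cos b = 2 sin ((b + z) / 2) sin ((b - z) / 2)`, Euler's product for the sine turns the
`k`-th pair of factors into a quotient of sine factors at `(b ± z) / 2` and `b / 2`; with
`1 - cos b = 2 sin² (b / 2)` the constants match. For `b = arcsin a + π / 2` one has `cos b = -a`,
and the zeros `b, 2π - b, 2π + b, 4π - b, …` are exactly the `γ n`.
-/

open Complex Real

lemma multipliable_one_sub_div_sq {c : ℕ → ℂ} {δ : ℝ} (hδ : 0 < δ)
    (hc : ∀ n : ℕ, ((n : ℝ) + 1) * δ ≤ ‖c n‖) (w : ℂ) :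
    Multipliable fun n => 1 - w / c n ^ 2 := by
  simp_rw [sub_eq_add_neg]
  refine multipliable_one_add_of_summable ?_
  refine (summable_pow_div_add (‖w‖ / δ ^ 2) 2 1 one_lt_two).of_nonneg_of_le
    (fun n => norm_nonneg _) fun n => ?_
  calc ‖-(w / c n ^ 2)‖ = ‖w‖ / ‖c n‖ ^ 2 := by rw [norm_neg, norm_div, norm_pow]
    _ ≤ ‖w‖ / (((n : ℝ) + 1) * δ) ^ 2 := by gcongr; exact hc n
    _ = ‖‖w‖ / δ ^ 2 / ((n : ℝ) + (1 : ℕ)) ^ 2‖ := by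
        rw [Real.norm_of_nonneg (by positivity), Nat.cast_one, div_div, mul_pow, mul_comm]

noncomputable def sineProduct (x : ℂ) : ℂ :=
  ∏' k : ℕ, (1 - x ^ 2 / (((k : ℂ) + 1) * π) ^ 2)

lemma multipliable_sineProduct (x : ℂ) :
    Multipliable fun k : ℕ => 1 - x ^ 2 / (((k : ℂ) + 1) * π) ^ 2 :=
  multipliable_one_sub_div_sq pi_pos (fun k => by
    rw [norm_mul, Complex.norm_real, Real.norm_of_nonneg pi_pos.le]
    norm_cast) _

lemma mul_sineProduct (x : ℂ) : x * sineProduct x = Complex.sin x := by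
  refine tendsto_nhds_unique
    ((multipliable_sineProduct x).hasProd.tendsto_prod_nat.const_mul x) ?_
  convert Complex.tendsto_euler_sin_prod (x / π) using 3 with n
  · field_simp
  · refine Finset.prod_congr rfl fun k _ => ?_
    field_simp
  · field_simp

lemma le_norm_two_mul_succ_mul_pi_add {b : ℂ} (hb : ‖b‖ ≤ π) (k : ℕ) :
    ((k : ℝ) + 1) * π ≤ ‖2 * ((k : ℂ) + 1) * π + b‖ := by
  have h : ‖(2 * ((k : ℂ) + 1) * π : ℂ)‖ = 2 * ((k : ℝ) + 1) * π := by
    norm_cast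
    rw [Real.norm_of_nonneg (by positivity)]
  have := norm_sub_norm_le (2 * ((k : ℂ) + 1) * π : ℂ) (-b)
  rw [sub_neg_eq_add, norm_neg, h] at this
  nlinarith [pi_pos, (k.cast_nonneg : (0 : ℝ) ≤ k)]

lemma one_sub_sq_div_sq_mul_one_sub_sq_div_sq {K : Type*} [Field K] [CharZero K] {b c : K}
    (z : K) (hc : c ≠ 0) (h₁ : 2 * c - b ≠ 0) (h₂ : 2 * c + b ≠ 0) :
    (1 - ((b + z) / 2) ^ 2 / c ^ 2) * (1 - ((b - z) / 2) ^ 2 / c ^ 2) =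
      (1 - z ^ 2 / (2 * c - b) ^ 2) * (1 - z ^ 2 / (2 * c + b) ^ 2) *
        (1 - (b / 2) ^ 2 / c ^ 2) ^ 2 := by
  field_simp
  ring

lemma one_sub_cos_eq_two_mul_sin_half_sq (b : ℂ) :
    1 - Complex.cos b = 2 * Complex.sin (b / 2) ^ 2 := by
  have h := Complex.cos_two_mul_eq_one_sub (b / 2)
  rw [mul_div_cancel₀ b two_ne_zero] at h
  linear_combination -h

lemma cos_sub_cos_eq_two_mul_sin_mul_sin (b z : ℂ) :
    Complex.cos z - Complex.cos b =
      2 * Complex.sin ((b + z) / 2) * Complex.sin ((b - z) / 2) := by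
  rw [Complex.cos_sub_cos, ← neg_sub b z, neg_div, Complex.sin_neg, add_comm z]
  ring

theorem cos_sub_cos_eq_mul_tprod {b : ℂ} (hb₀ : b ≠ 0) (hbπ : ‖b‖ ≤ π)
    {γ : ℕ → ℂ} (hγ₀ : γ 0 = b)
    (hγodd : ∀ k : ℕ, γ (2 * k + 1) = 2 * ((k : ℂ) + 1) * π - b)
    (hγeven : ∀ k : ℕ, γ (2 * k + 2) = 2 * ((k : ℂ) + 1) * π + b) (z : ℂ) :
    (Multipliable fun n => 1 - z ^ 2 / γ n ^ 2) ∧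
      Complex.cos z - Complex.cos b = (1 - Complex.cos b) * ∏' n, (1 - z ^ 2 / γ n ^ 2) := by
  have hodd_le (k : ℕ) : ((k : ℝ) + 1) * π ≤ ‖γ (2 * k + 1)‖ := by
    rw [hγodd, sub_eq_add_neg]
    exact le_norm_two_mul_succ_mul_pi_add (by rwa [norm_neg]) k
  have heven_le (k : ℕ) : ((k : ℝ) + 1) * π ≤ ‖γ (2 * k + 2)‖ := by
    rw [hγeven]
    exact le_norm_two_mul_succ_mul_pi_add hbπ k
  have hodd := multipliable_one_sub_div_sq (c := fun k => γ (2 * k + 1)) pi_pos hodd_le (z ^ 2)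
  have heven := multipliable_one_sub_div_sq (c := fun k => γ (2 * k + 2)) pi_pos heven_le (z ^ 2)
  have hprod := HasProd.zero_mul (f := fun n => 1 - z ^ 2 / γ n ^ 2)
    (hodd.hasProd.even_mul_odd (f := fun n => 1 - z ^ 2 / γ (n + 1) ^ 2) heven.hasProd)
  refine ⟨hprod.multipliable, ?_⟩
  set Podd := ∏' k : ℕ, (1 - z ^ 2 / γ (2 * k + 1) ^ 2)
  set Peven := ∏' k : ℕ, (1 - z ^ 2 / γ (2 * k + 2) ^ 2)
  have hpair : Podd * Peven * sineProduct (b / 2) ^ 2 =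
      sineProduct ((b + z) / 2) * sineProduct ((b - z) / 2) := by
    have h₀ := multipliable_sineProduct (b / 2)
    rw [sineProduct, ← h₀.tprod_pow, ← hodd.tprod_mul heven,
      ← (hodd.mul heven).tprod_mul (h₀.pow 2), sineProduct, sineProduct,
      ← (multipliable_sineProduct _).tprod_mul (multipliable_sineProduct _)]
    refine tprod_congr fun k => ?_
    have hk : ((k : ℂ) + 1) * π ≠ 0 :=
      mul_ne_zero (Nat.cast_add_one_ne_zero k) (ofReal_ne_zero.2 pi_ne_zero)
    have hkπ : (0 : ℝ) < (k + 1) * π := by positivity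
    have h₁ : γ (2 * k + 1) ≠ 0 := norm_pos_iff.1 (hkπ.trans_le (hodd_le k))
    have h₂ : γ (2 * k + 2) ≠ 0 := norm_pos_iff.1 (hkπ.trans_le (heven_le k))
    rw [hγodd, mul_assoc] at h₁ ⊢
    rw [hγeven, mul_assoc] at h₂ ⊢
    rw [one_sub_sq_div_sq_mul_one_sub_sq_div_sq z hk h₁ h₂, mul_assoc]
  rw [hprod.tprod_eq, hγ₀, cos_sub_cos_eq_two_mul_sin_mul_sin,
    one_sub_cos_eq_two_mul_sin_half_sq,
    ← mul_sineProduct, ← mul_sineProduct, ← mul_sineProduct]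
  -- both sides are `(b² - z²) / 2 · Podd · Peven · sineProduct (b / 2)²`
  have hb : b ^ 2 * (z ^ 2 / b ^ 2) = z ^ 2 := mul_div_cancel₀ _ (pow_ne_zero 2 hb₀)
  linear_combination
    (z ^ 2 - b ^ 2) / 2 * hpair + sineProduct (b / 2) ^ 2 * Podd * Peven / 2 * hb

/-- Product expansion of `cos z + a` over its zeros `±γ_n`,
`γ_n = (n + 1/2)π + (-1)ⁿ arcsin a`. -/
theorem cos_add_const_product_expansion
    (a : ℝ) (ha : a ∈ Set.Ioo (-1 : ℝ) 1)
    (γ : ℕ → ℝ) (hγ : ∀ n : ℕ, γ n = ((n : ℝ) + 1/2) * π + (-1) ^ n * Real.arcsin a) :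
    ∀ z : ℂ,
      (Multipliable fun n : ℕ => 1 - z ^ 2 / ((γ n : ℂ)) ^ 2) ∧
      Complex.cos z + (a : ℂ) =
        ((1 : ℂ) + (a : ℂ)) * ∏' n : ℕ, (1 - z ^ 2 / ((γ n : ℂ)) ^ 2) := by
  intro z
  set b : ℝ := arcsin a + π / 2 with hb
  have hb₀ : (b : ℂ) ≠ 0 :=
    ofReal_ne_zero.2 (by linarith [neg_pi_div_two_lt_arcsin.2 ha.1] : 0 < b).ne'
  have hbπ : ‖(b : ℂ)‖ ≤ π := by
    rw [norm_real, Real.norm_eq_abs, abs_le]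
    constructor <;> linarith [neg_pi_div_two_le_arcsin a, arcsin_le_pi_div_two a]
  have hcos : Complex.cos b = -a := by
    rw [← ofReal_cos, Real.cos_add_pi_div_two, Real.sin_arcsin ha.1.le ha.2.le, ofReal_neg]
  obtain ⟨hmult, hexpand⟩ := cos_sub_cos_eq_mul_tprod hb₀ hbπ (γ := fun n => (γ n : ℂ))
    (by rw [hγ, hb]; push_cast; ring)
    (fun k => by rw [hγ, hb, pow_succ, pow_mul]; push_cast; ring)
    (fun k => by rw [hγ, hb, pow_succ, pow_succ, pow_mul]; push_cast; ring) z
  rw [hcos, sub_neg_eq_add, sub_neg_eq_add] at hexpand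
  exact ⟨hmult, hexpand⟩
end

section
/- Let σ > 0, set a_n = n²π²/σ² for n ≥ 1, and let κ : {1,2,...} → (0,∞) be such that the series Σ_{n≥1} max(κ(n) − a_n, 0)/n² converges. Then there exists a constant C > 0 such that for every real t and every N ≥ 1, ∏_{n=1}^N (1 + t²/a_n²)/(1 + t²/κ(n)²) ≤ C. -/
open Real Finset

/-! With `u_n = (κ_n - a_n)₊ / a_n`, each factor is at most `(1 + u_n)²`: for `κ_n ≤ a_n` it is
at most `1`, otherwise at most `κ_n² / a_n²`. Since `a_n` is a constant multiple of `n²`, the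
hypothesis says exactly that `Σ u_n` converges, so the partial products are bounded by
`exp (Σ u_n)²`. -/

lemma one_add_div_one_add_le {c d m : ℝ} (hd : 0 ≤ d) (hm : 1 ≤ m) (hcd : c ≤ m * d) :
    (1 + c) / (1 + d) ≤ m :=
  div_le_of_le_mul₀ (by positivity) (by positivity) (by nlinarith)

lemma one_add_sq_div_one_add_sq_le {a b : ℝ} (ha : 0 < a) (hb : 0 < b) (t : ℝ) :
    (1 + t ^ 2 / a ^ 2) / (1 + t ^ 2 / b ^ 2) ≤ (1 + max (b - a) 0 / a) ^ 2 := by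
  have hba : b / a ≤ 1 + max (b - a) 0 / a := by
    rw [div_le_iff₀ ha, add_mul, div_mul_cancel₀ _ ha.ne']
    linarith [le_max_left (b - a) 0]
  refine one_add_div_one_add_le (by positivity)
    (one_le_pow₀ (le_add_of_nonneg_right (by positivity))) ?_
  calc t ^ 2 / a ^ 2 = (b / a) ^ 2 * (t ^ 2 / b ^ 2) := by field_simp
    _ ≤ (1 + max (b - a) 0 / a) ^ 2 * (t ^ 2 / b ^ 2) := by gcongr

lemma prod_one_add_sq_le_exp_tsum_sq {ι : Type*} {u : ι → ℝ} (hu : ∀ i, 0 ≤ u i)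
    (hsum : Summable u) (s : Finset ι) :
    ∏ i ∈ s, (1 + u i) ^ 2 ≤ exp (∑' i, u i) ^ 2 := by
  rw [prod_pow]
  gcongr
  · exact prod_nonneg fun i _ => by linarith [hu i]
  calc ∏ i ∈ s, (1 + u i) ≤ exp (∑ i ∈ s, u i) := prod_one_add_le_exp_sum s hu
    _ ≤ exp (∑' i, u i) := exp_le_exp.mpr (hsum.sum_le_tsum s fun i _ => hu i)

/-- Key product bound: if `Σ_{n≥1} (κ_n - n²π²/σ²)₊ / n² < ∞` and `κ_n > 0`, then the
partial products `∏_{n=1}^N (1 + t²/a_n²)/(1 + t²/κ_n²)` with `a_n = n²π²/σ²` are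
uniformly bounded in `t` and `N`. -/
theorem product_ratio_uniform_bound
    (σ : ℝ) (hσ : 0 < σ) (a : ℕ → ℝ) (ha : ∀ n : ℕ, a n = (n : ℝ) ^ 2 * π ^ 2 / σ ^ 2)
    (κ : ℕ → ℝ) (hκpos : ∀ n : ℕ, 1 ≤ n → 0 < κ n)
    (hsum : Summable fun n : ℕ => max (κ (n + 1) - a (n + 1)) 0 / ((n : ℝ) + 1) ^ 2) :
    ∃ C : ℝ, 0 < C ∧ ∀ t : ℝ, ∀ N : ℕ, 1 ≤ N →
      ∏ n ∈ Finset.Icc 1 N, ((1 + t ^ 2 / (a n) ^ 2) / (1 + t ^ 2 / (κ n) ^ 2)) ≤ C := by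
  have ha_pos : ∀ n : ℕ, 1 ≤ n → 0 < a n := fun n hn => by
    rw [ha]; have : (0 : ℝ) < n := by exact_mod_cast hn
    positivity
  set u : ℕ → ℝ := fun n => max (κ n - a n) 0 / a n
  have hu_nonneg : ∀ n, 0 ≤ u n := fun n => div_nonneg (le_max_right _ _) (by rw [ha]; positivity)
  have hu : Summable u := by
    rw [← summable_nat_add_iff 1]
    refine (hsum.div_const (π ^ 2 / σ ^ 2)).congr fun n => ?_
    simp only [u, ha (n + 1)]
    push_cast
    field_simp
  refine ⟨exp (∑' n, u n) ^ 2, by positivity, fun t N _ => ?_⟩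
  calc ∏ n ∈ Icc 1 N, ((1 + t ^ 2 / (a n) ^ 2) / (1 + t ^ 2 / (κ n) ^ 2))
      ≤ ∏ n ∈ Icc 1 N, (1 + u n) ^ 2 :=
        prod_le_prod (fun n _ => by positivity) fun n hn =>
          one_add_sq_div_one_add_sq_le (ha_pos n (mem_Icc.mp hn).1) (hκpos n (mem_Icc.mp hn).1) t
    _ ≤ exp (∑' n, u n) ^ 2 := prod_one_add_sq_le_exp_tsum_sq hu_nonneg hu _
end
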